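/- arXiv:2108.13212 — 7 statements merged into one kernel-verified Lean document; each statement's English description precedes it below -/
import Mathlib

section
/- Let G be a group with subgroups A, B and an isomorphism φ : A ≃* B, and form the HNN extension HNNExtension G A B φ with canonical injection of : G → HNNExtension G A B φ and stable letter t. Assume that every element z ∈ B that centralizes B satisfies of(z) * t = t * of(z). Let c ∈ B with c ≠ 1 be an element that centralizes B, and let τ be a group automorphism of HNNExtension G A B φ such that τ(of(g)) = of(g) for all g ∈ G and τ(t) = of(c) * t. If τ is an inner automorphism of HNNExtension G A B φ, then c has finite order in G and B = G (i.e. B is the whole group, B = ⊤). -/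
/-!
Write `τ = conj w`. Then `w` centralises `G` and `w t w⁻¹ = c t`, so `⁅t ^ n, w⁆ = c ^ (-n)`
because `c` commutes with `t`. If `w = h ∈ G`, Britton's lemma puts `h` in `B`, where it
commutes with `t`, forcing `c = 1`. Otherwise a reduced word for `w` starts with some `t ^ v`
and ends with a letter `t ^ u k`. As `w = g w g⁻¹`, there are reduced words for `w` with any
head `g h` and last letter `t ^ u (k g⁻¹)`: uniqueness of the head coset gives
`toSubgroup (-v) = ⊤`, and Britton's lemma for `t ^ v w t ^ (-v) ∈ G w` puts every `k g⁻¹` in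
`toSubgroup v`. So `A = B = ⊤`, every element is `g₀ t ^ m`, and `w = g₀ t ^ m` with `m ≠ 0`
commutes with `t ^ m`, whence `c ^ m = 1`.
-/

open scoped commutatorElement

theorem commutatorElement_zpow_left_of_mul_mul_inv_eq {H : Type*} [Group H] {w a z : H}
    (hza : Commute z a) (hw : w * a * w⁻¹ = z * a) (n : ℤ) : ⁅a ^ n, w⁆ = z ^ (-n) := by
  have hconj : w * a ^ (-n) * w⁻¹ = z ^ (-n) * a ^ (-n) := by
    rw [← conj_zpow, hw, hza.mul_zpow]
  calc ⁅a ^ n, w⁆ = a ^ n * (w * a ^ (-n) * w⁻¹) := by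
        simp only [commutatorElement_def, zpow_neg]; group
    _ = z ^ (-n) := by rw [hconj, ((hza.zpow_zpow (-n) n).symm).left_comm]; group

namespace HNNExtension

open NormalWord

variable {G : Type*} [Group G] {A B : Subgroup G} {φ : A ≃* B}

theorem t_mem_normalizer_range (hA : A = ⊤) (hB : B = ⊤) :
    (t : HNNExtension G A B φ) ∈
      Subgroup.normalizer ((of.range : Subgroup (HNNExtension G A B φ)) : Set _) := by
  refine Subgroup.mem_normalizer_iff.2 fun x => ⟨?_, ?_⟩
  · rintro ⟨g, rfl⟩
    exact ⟨φ ⟨g, by simp [hA]⟩, by rw [eq_mul_inv_iff_mul_eq, ← t_mul_of]⟩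
  · rintro ⟨g, hg⟩
    have hg' : g ∈ B := by simp [hB]
    refine ⟨φ.symm ⟨g, hg'⟩, ?_⟩
    calc of (φ.symm ⟨g, hg'⟩ : G) = of (φ.symm ⟨g, hg'⟩ : G) * t⁻¹ * t := by group
      _ = t⁻¹ * of g * t := by rw [← inv_t_mul_of]
      _ = x := by rw [hg]; group

theorem of_range_sup_zpowers_t :
    (of.range ⊔ Subgroup.zpowers t : Subgroup (HNNExtension G A B φ)) = ⊤ := by
  refine (Subgroup.eq_top_iff' _).2 fun x => ?_
  induction x using induction_on with
  | of g => exact Subgroup.mem_sup_left ⟨g, rfl⟩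
  | t => exact Subgroup.mem_sup_right (Subgroup.mem_zpowers t)
  | mul x y hx hy => exact mul_mem hx hy
  | inv x hx => exact inv_mem hx

theorem exists_eq_of_mul_t_zpow (hA : A = ⊤) (hB : B = ⊤) (x : HNNExtension G A B φ) :
    ∃ (g : G) (m : ℤ), x = of g * t ^ m := by
  have hx : x ∈ ((of.range ⊔ Subgroup.zpowers t : Subgroup (HNNExtension G A B φ)) :
      Set _) := by
    rw [of_range_sup_zpowers_t]; trivial
  rw [Subgroup.coe_mul_of_right_le_normalizer_left _ _
    (Subgroup.zpowers_le.2 (t_mem_normalizer_range hA hB))] at hx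
  obtain ⟨_, ⟨g, rfl⟩, _, ⟨m, rfl⟩, rfl⟩ := hx
  exact ⟨g, m, rfl⟩

theorem mem_of_inv_t_mul_of_mul_t_mem_range {g : G}
    (h : t⁻¹ * of g * t ∈ (of.range : Subgroup (HNNExtension G A B φ))) : g ∈ B := by
  by_contra hg
  let w : ReducedWord G A B := ⟨1, [(-1, g), (1, 1)], by simp [hg]⟩
  have hnil := ReducedWord.toList_eq_nil_of_mem_of_range φ w
    (by simpa [w, ReducedWord.prod] using h)
  simp [w] at hnil

theorem eq_one_of_of_mul_t_mul_inv_eq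
    (hcomm : ∀ z ∈ B, (∀ b ∈ B, z * b = b * z) →
      (of z : HNNExtension G A B φ) * t = t * of z)
    {c h : G} (hc : c ∈ B) (hh : ∀ b ∈ B, h * b = b * h)
    (hht : of h * t * (of h)⁻¹ = of c * (t : HNNExtension G A B φ)) : c = 1 := by
  have hhB : h ∈ B := by
    have hconj : t⁻¹ * of (c⁻¹ * h) * t = (of h : HNNExtension G A B φ) := by
      rw [mul_inv_eq_iff_eq_mul] at hht
      rw [map_mul, map_inv, mul_assoc _ _ (t : HNNExtension G A B φ), mul_assoc _ (of h), hht]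
      group
    simpa using mul_mem hc (mem_of_inv_t_mul_of_mul_t_mem_range ⟨h, hconj.symm⟩)
  rw [hcomm h hhB hh, mul_inv_cancel_right, right_eq_mul] at hht
  exact (map_eq_one_iff _ (of_injective φ)).1 hht

namespace NormalWord.ReducedWord

variable (φ)

theorem exists_prod_eq_of_mul_prod_mul_of (W : ReducedWord G A B) {l : List (ℤˣ × G)}
    {u : ℤˣ} {k : G} (hW : W.toList = l ++ [(u, k)]) (g₁ g₂ : G) :
    ∃ W' : ReducedWord G A B, W'.prod φ = of g₁ * W.prod φ * of g₂ ∧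
      W'.head = g₁ * W.head ∧ W'.toList = l ++ [(u, k * g₂)] := by
  have chain := W.chain
  rw [hW, List.isChain_append] at chain
  refine ⟨⟨g₁ * W.head, l ++ [(u, k * g₂)], List.isChain_append.2 ⟨chain.1,
    List.isChain_singleton _, fun a ha b hb => ?_⟩⟩, ?_, rfl, rfl⟩
  · simp only [List.head?_cons, Option.mem_def, Option.some.injEq] at hb
    subst hb
    exact chain.2.2 a ha (u, k) rfl
  · simp [ReducedWord.prod, hW, mul_assoc]

theorem toSubgroup_neg_eq_top_of_forall_commute (W : ReducedWord G A B)
    (hW : ∀ g : G, Commute (of g) (W.prod φ)) :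
    ∀ v ∈ (W.toList.map Prod.fst).head?, toSubgroup A B (-v) = ⊤ := by
  intro v hv
  rcases W.toList.eq_nil_or_concat' with hnil | ⟨l, ⟨u, k⟩, hl⟩
  · simp [hnil] at hv
  refine eq_top_iff.2 fun y _ => ?_
  set g := W.head * y * W.head⁻¹
  obtain ⟨W', hprod, hhead, -⟩ := W.exists_prod_eq_of_mul_prod_mul_of φ hl g g⁻¹
  rw [(hW g).eq, map_inv, mul_inv_cancel_right] at hprod
  have := (ReducedWord.map_fst_eq_and_of_prod_eq φ hprod.symm).2 v (by rwa [← List.head?_map])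
  simpa [hhead, g, mul_assoc] using this

theorem mem_toSubgroup_of_commutatorElement_mem_range (W : ReducedWord G A B) {v u : ℤˣ}
    {l : List (ℤˣ × G)} {k : G} (hfirst : (W.toList.map Prod.fst).head? = some v)
    (hlast : W.toList = l ++ [(u, k)])
    (hcomm : ⁅(t : HNNExtension G A B φ) ^ (v : ℤ), W.prod φ⁆ ∈ of.range) :
    k ∈ toSubgroup A B v := by
  -- otherwise `t ^ v * W * t ^ (-v)` is a reduced word two letters longer than `c * W`
  by_contra hk
  obtain ⟨c, hc⟩ := hcomm
  obtain ⟨⟨v', g⟩, L, hL⟩ := List.exists_cons_of_ne_nil (by simp [hlast] : W.toList ≠ [])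
  have hv' : v' = v := by simpa [hL] using hfirst
  have chain : ((v, W.head) :: (W.toList ++ [(-v, 1)])).IsChain
      (fun a b => a.2 ∈ toSubgroup A B a.1 → a.1 = b.1) := by
    refine List.isChain_cons.2 ⟨by simp [hL, hv'], List.isChain_append.2 ⟨W.chain,
      List.isChain_singleton _, fun a ha b hb => ?_⟩⟩
    simp only [hlast, List.getLast?_concat, List.head?_cons, Option.mem_def,
      Option.some.injEq] at ha hb
    subst ha hb
    intro hku
    exact Int.units_ne_iff_eq_neg.1 fun huv => hk (huv ▸ hku)
  let V : ReducedWord G A B := ⟨1, _, chain⟩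
  let W' : ReducedWord G A B := ⟨c * W.head, W.toList, W.chain⟩
  have hV : V.prod φ = W'.prod φ := by
    calc V.prod φ = t ^ (v : ℤ) * W.prod φ * (t ^ (v : ℤ))⁻¹ := by
          simp [V, ReducedWord.prod, mul_assoc]
      _ = of c * W.prod φ := by rw [hc, commutatorElement_def]; group
      _ = W'.prod φ := by simp [W', ReducedWord.prod, mul_assoc]
  have hlen := congrArg List.length (ReducedWord.map_fst_eq_and_of_prod_eq φ hV).1
  simp [V, W'] at hlen
  omega

end NormalWord.ReducedWord

theorem eq_top_and_eq_top_of_forall_commute {x : HNNExtension G A B φ} (hxG : x ∉ of.range)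
    (hx : ∀ g : G, Commute (of g) x)
    (ht : ∀ v : ℤˣ, ⁅(t : HNNExtension G A B φ) ^ (v : ℤ), x⁆ ∈ of.range) :
    A = ⊤ ∧ B = ⊤ := by
  obtain ⟨d⟩ := TransversalPair.nonempty G A B
  set W := (x • (NormalWord.empty : NormalWord d)).toReducedWord
  have hWx : W.prod φ = x := by simp [W]
  rcases W.toList.eq_nil_or_concat' with hnil | ⟨l, ⟨u, k⟩, hl⟩
  · exact absurd ⟨W.head, by simp [← hWx, ReducedWord.prod, hnil]⟩ hxG
  obtain ⟨⟨v, _⟩, _, hL⟩ := List.exists_cons_of_ne_nil (by simp [hl] : W.toList ≠ [])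
  have hv : (W.toList.map Prod.fst).head? = some v := by simp [hL]
  have hneg : toSubgroup A B (-v) = ⊤ :=
    W.toSubgroup_neg_eq_top_of_forall_commute φ (hWx ▸ hx) v hv
  have hpos : toSubgroup A B v = ⊤ := by
    refine eq_top_iff.2 fun y _ => ?_
    obtain ⟨W', hW'x, -, hW'l⟩ :=
      W.exists_prod_eq_of_mul_prod_mul_of φ hl (k⁻¹ * y)⁻¹ (k⁻¹ * y)
    rw [hWx, map_inv, ((hx _).inv_left).eq, inv_mul_cancel_right] at hW'x
    have hv' : (W'.toList.map Prod.fst).head? = some v := by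
      rw [(ReducedWord.map_fst_eq_and_of_prod_eq φ (hW'x.trans hWx.symm)).1, hv]
    simpa using W'.mem_toSubgroup_of_commutatorElement_mem_range φ hv' hW'l (hW'x ▸ ht v)
  rcases Int.units_eq_one_or v with rfl | rfl
  · exact ⟨hpos, hneg⟩
  · exact ⟨by simpa using hneg, hpos⟩

end HNNExtension

open HNNExtension

/-- Lemma 6.5 ("non-inner from HNN") of the paper: if the twist `τ` of the HNN
extension `HNNExtension G A B φ` determined by an element `c ∈ B` centralizing `B`
(where elements of `B` centralizing `B` commute with the stable letter) is an inner
automorphism, then `c` has finite order and `B = G`. -/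
theorem hnn_twist_inner_of_centralising {G : Type*} [Group G] {A B : Subgroup G}
    (φ : A ≃* B)
    (hcomm : ∀ z ∈ B, (∀ b ∈ B, z * b = b * z) →
      (HNNExtension.of z : HNNExtension G A B φ) * HNNExtension.t =
        HNNExtension.t * HNNExtension.of z)
    (c : G) (hcB : c ∈ B) (hc1 : c ≠ 1) (hcc : ∀ b ∈ B, c * b = b * c)
    (τ : MulAut (HNNExtension G A B φ))
    (hτof : ∀ g : G, τ (HNNExtension.of g) = HNNExtension.of g)
    (hτt : τ (HNNExtension.t : HNNExtension G A B φ) =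
      HNNExtension.of c * HNNExtension.t)
    (hinner : ∃ w : HNNExtension G A B φ, ∀ x, τ x = w * x * w⁻¹) :
    IsOfFinOrder c ∧ B = ⊤ := by
  obtain ⟨w, hw⟩ := hinner
  have hwG : ∀ g : G, Commute (of g) w := fun g =>
    (mul_inv_eq_iff_eq_mul.1 ((hw _).symm.trans (hτof g))).symm
  have hwt : w * t * w⁻¹ = of c * t := (hw t).symm.trans hτt
  by_cases hw₀ : w ∈ of.range
  · obtain ⟨h, rfl⟩ := hw₀
    exact absurd (eq_one_of_of_mul_t_mul_inv_eq hcomm hcB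
      (fun b _ => ((hwG b).of_map (of_injective φ)).eq.symm) hwt) hc1
  have hct : Commute (of c) (t : HNNExtension G A B φ) := hcomm c hcB hcc
  obtain ⟨hA, hB⟩ := eq_top_and_eq_top_of_forall_commute hw₀ hwG fun v =>
    ⟨c ^ (-(v : ℤ)), by rw [map_zpow, commutatorElement_zpow_left_of_mul_mul_inv_eq hct hwt]⟩
  obtain ⟨g₀, m, rfl⟩ := exists_eq_of_mul_t_zpow hA hB w
  have hm : m ≠ 0 := by rintro rfl; exact hw₀ ⟨g₀, by simp⟩
  have hwtm : Commute ((t : HNNExtension G A B φ) ^ m) (of g₀ * t ^ m) := by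
    simpa using ((hwG g₀).inv_left.mul_left (Commute.refl (of g₀ * t ^ m)))
  refine ⟨isOfFinOrder_iff_zpow_eq_one.2 ⟨-m, neg_ne_zero.2 hm, of_injective φ ?_⟩, hB⟩
  rw [map_zpow, map_one, ← commutatorElement_zpow_left_of_mul_mul_inv_eq hct hwt,
    commutatorElement_eq_one_iff_commute.2 hwtm]
end

section
/- Let G be a group with subgroups A, B and an isomorphism φ : A ≃* B, and form the HNN extension HNNExtension G A B φ with canonical injection of : G → HNNExtension G A B φ and stable letter t. Assume that every element z ∈ B that centralizes B satisfies of(z) * t = t * of(z). Let c ∈ B be an element of infinite order in G that centralizes B, and let τ be a group automorphism of HNNExtension G A B φ such that τ(of(g)) = of(g) for all g ∈ G and τ(t) = of(c) * t. Then for every integer n ≥ 1 the automorphism τⁿ is not an inner automorphism of HNNExtension G A B φ; in particular, τ represents an infinite-order element of the outer automorphism group of HNNExtension G A B φ. -/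
/-!
Suppose `w` induces `τⁿ`. Then `w` centralizes `G`, and `w t w⁻¹ = z t` with `z = cⁿ`, which
commutes with `t`. By Britton's lemma the reduced forms of `w t` and `t z w` have the same
sequence of exponents of `t`, which forces all letters `t^±1` of a reduced word for `w` to carry
one exponent `u`. If there are no such letters, `w ∈ G` lies in `B` and centralizes it, so it
commutes with `t` and `z = 1`. Otherwise, comparing the reduced forms of `w g` and `g w` for
`g ∈ G` shows that `t^(-u)` conjugates `G` into itself, so `w = sᵐ g₀` with `s = t^u`, `m ≥ 1`
and `g₀ ∈ G`. Conjugation by `g₀` then fixes `sᵐ` and sends `s` to `zᵘ s`, hence `z^(u m) = 1`.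
-/

theorem List.eq_of_mem_of_rotate_one_eq_self {α : Type*} {l : List α} (h : l.rotate 1 = l)
    {x y : α} (hx : x ∈ l) (hy : y ∈ l) : x = y := by
  have : Nonempty α := ⟨x⟩
  obtain ⟨a, ha⟩ := List.rotate_one_eq_self_iff_eq_replicate.1 h
  rw [ha] at hx hy
  exact (List.eq_of_mem_replicate hx).trans (List.eq_of_mem_replicate hy).symm

theorem List.rotate_one_eq_self_of_dropLast_eq_tail {α : Type*} {l : List α}
    (h : l.dropLast = l.tail) (hl : l.head? = l.getLast?) : l.rotate 1 = l := by
  cases l with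
  | nil => rfl
  | cons a l =>
    have hlast : (a :: l).getLast (List.cons_ne_nil a l) = a := by
      simpa [List.getLast?_eq_some_getLast (List.cons_ne_nil a l)] using hl.symm
    conv_rhs => rw [← List.dropLast_concat_getLast (List.cons_ne_nil a l), h, hlast]
    simp

theorem MulAut.pow_apply_eq_pow_mul {M : Type*} [Monoid M] (τ : MulAut M) {x y : M}
    (hy : τ y = y) (hx : τ x = y * x) (n : ℕ) : (τ ^ n) x = y ^ n * x := by
  induction n with
  | zero => simp
  | succ n ih =>
    rw [pow_succ', MulAut.mul_apply, ih, map_mul, map_pow, hy, hx, pow_succ, mul_assoc]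

theorem exists_mul_prod_map_mul_eq_pow_mul {H : Type*} [Group H] {K : Subgroup H} {s : H}
    (hs : ∀ k ∈ K, s⁻¹ * k * s ∈ K) {l : List H} (hl : ∀ k ∈ l, k ∈ K) {k₀ : H}
    (hk₀ : k₀ ∈ K) : ∃ k ∈ K, k₀ * (l.map (s * ·)).prod = s ^ l.length * k := by
  induction l generalizing k₀ with
  | nil => exact ⟨k₀, hk₀, by simp⟩
  | cons a l ih =>
    obtain ⟨k, hk, hprod⟩ := ih (fun k hk => hl k (List.mem_cons_of_mem a hk))
      (K.mul_mem (hs k₀ hk₀) (hl a List.mem_cons_self))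
    refine ⟨k, hk, ?_⟩
    rw [List.map_cons, List.prod_cons, List.length_cons, pow_succ', mul_assoc s (s ^ _),
      ← hprod]
    group

theorem pow_eq_one_of_conj_eq_mul {H : Type*} [Group H] {s k z : H} {m : ℕ}
    (hzs : Commute z s) (hk : Commute (s ^ m * k) k)
    (hw : s ^ m * k * s * (s ^ m * k)⁻¹ = z * s) : z ^ m = 1 := by
  have hks : k * s * k⁻¹ = z * s := by
    calc k * s * k⁻¹ = (s ^ m)⁻¹ * (s ^ m * k * s * (s ^ m * k)⁻¹) * s ^ m := by group
      _ = z * s := by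
        rw [hw, mul_assoc, ((hzs.mul_left (Commute.refl s)).pow_right m).eq,
          inv_mul_cancel_left]
  have hksm : k * s ^ m * k⁻¹ = s ^ m := by
    rw [mul_inv_eq_iff_eq_mul]
    exact mul_right_cancel (b := k) (by rw [mul_assoc, hk.eq])
  rwa [← conj_pow, hks, hzs.mul_pow, mul_eq_right] at hksm

namespace HNNExtension

open NormalWord

variable {G : Type*} [Group G] {A B : Subgroup G} {φ : A ≃* B}

theorem inv_t_zpow_mul_of_mul_t_zpow_mem_range_iff (u : ℤˣ) (g : G) :
    (t ^ (u : ℤ))⁻¹ * of g * t ^ (u : ℤ) ∈ (of : G →* HNNExtension G A B φ).range ↔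
      g ∈ toSubgroup A B (-u) := by
  constructor
  · intro hrange
    by_contra hg
    let r : ReducedWord G A B :=
      ⟨1, [(-u, g), (u, 1)], List.isChain_pair.2 fun hmem => absurd hmem hg⟩
    have hprod : r.prod φ = (t ^ (u : ℤ))⁻¹ * of g * t ^ (u : ℤ) := by
      simp [r, ReducedWord.prod, mul_assoc]
    simpa [r] using ReducedWord.toList_eq_nil_of_mem_of_range φ r (hprod ▸ hrange)
  · intro hg
    rcases Int.units_eq_one_or u with rfl | rfl
    · exact ⟨_, by simpa using equiv_symm_eq_conj (φ := φ) ⟨g, hg⟩⟩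
    · exact ⟨_, by simpa using equiv_eq_conj (φ := φ) ⟨g, by simpa using hg⟩⟩

namespace NormalWord.ReducedWord

theorem exists_prod_eq (x : HNNExtension G A B φ) : ∃ r : ReducedWord G A B, r.prod φ = x :=
  let ⟨d⟩ := TransversalPair.nonempty G A B
  ⟨_, (NormalWord.equiv φ d).symm_apply_apply x⟩

theorem exists_prod_mul_of (r : ReducedWord G A B) (g : G) :
    ∃ r' : ReducedWord G A B, r'.prod φ = r.prod φ * of g ∧
      r'.toList.map Prod.fst = r.toList.map Prod.fst ∧
      (r.toList ≠ [] → r'.head = r.head) := by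
  obtain ⟨h, L, hL⟩ := r
  rcases List.eq_nil_or_concat' L with rfl | ⟨L, p, rfl⟩
  · exact ⟨⟨h * g, [], List.isChain_nil⟩, by simp [ReducedWord.prod], rfl, by simp⟩
  · have hchain : (L ++ [(p.1, p.2 * g)]).IsChain
        fun a b => a.2 ∈ toSubgroup A B a.1 → a.1 = b.1 := by
      obtain ⟨hL, -, hlast⟩ := List.isChain_append.1 hL
      exact List.isChain_append.2 ⟨hL, List.isChain_singleton _, by simpa using hlast⟩
    exact ⟨⟨h, _, hchain⟩, by simp [ReducedWord.prod, mul_assoc], by simp, fun _ => rfl⟩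

theorem exists_prod_mul_t (r : ReducedWord G A B) :
    ∃ r' : ReducedWord G A B, r'.prod φ = r.prod φ * t ∧
      (r'.toList.map Prod.fst = r.toList.map Prod.fst ++ [1] ∨
        (r.toList.map Prod.fst).getLast? = some (-1) ∧
          r'.toList.map Prod.fst = (r.toList.map Prod.fst).dropLast) := by
  obtain ⟨h, L, hL⟩ := r
  by_cases hlast : ∀ p ∈ L.getLast?, p.2 ∈ toSubgroup A B p.1 → p.1 = 1
  · have hchain : (L ++ [((1 : ℤˣ), (1 : G))]).IsChain
        fun a b => a.2 ∈ toSubgroup A B a.1 → a.1 = b.1 :=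
      List.isChain_append.2 ⟨hL, List.isChain_singleton _, by simpa using hlast⟩
    exact ⟨⟨h, _, hchain⟩, by simp [ReducedWord.prod, mul_assoc], Or.inl (by simp)⟩
  · push Not at hlast
    obtain ⟨p, hp, hpmem, hp1⟩ := hlast
    have hp1 : p.1 = -1 := (Int.units_eq_one_or p.1).resolve_left hp1
    obtain ⟨L, rfl⟩ := List.getLast?_eq_some_iff.1 hp
    obtain ⟨p₁, p₂⟩ := p
    subst hp1
    obtain ⟨r', hprod, hfst, -⟩ := exists_prod_mul_of (φ := φ)
      ⟨h, L, (List.isChain_append.1 hL).1⟩ (φ.symm ⟨p₂, hpmem⟩)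
    refine ⟨r', ?_, Or.inr ⟨by simp, by simpa using hfst⟩⟩
    rw [hprod, equiv_symm_eq_conj]
    simp [ReducedWord.prod, mul_assoc]

theorem exists_t_mul_prod (r : ReducedWord G A B) :
    ∃ r' : ReducedWord G A B, r'.prod φ = t * r.prod φ ∧
      (r'.toList.map Prod.fst = 1 :: r.toList.map Prod.fst ∨
        (r.toList.map Prod.fst).head? = some (-1) ∧
          r'.toList.map Prod.fst = (r.toList.map Prod.fst).tail) := by
  obtain ⟨h, L, hL⟩ := r
  by_cases hhead : ∀ p ∈ L.head?, h ∈ toSubgroup A B 1 → 1 = p.1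
  · exact ⟨⟨1, ((1 : ℤˣ), h) :: L, List.isChain_cons.2 ⟨hhead, hL⟩⟩,
      by simp [ReducedWord.prod, mul_assoc], Or.inl rfl⟩
  · push Not at hhead
    obtain ⟨p, hp, hpmem, hp1⟩ := hhead
    have hp1 : p.1 = -1 := (Int.units_eq_one_or p.1).resolve_left hp1.symm
    obtain ⟨L, rfl⟩ : ∃ L', L = p :: L' := ⟨L.tail, (List.cons_head?_tail hp).symm⟩
    obtain ⟨p₁, p₂⟩ := p
    subst hp1
    refine ⟨⟨φ ⟨h, hpmem⟩ * p₂, L, (List.isChain_cons.1 hL).2⟩, ?_,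
      Or.inr ⟨by simp, by simp⟩⟩
    simp [ReducedWord.prod, equiv_eq_conj, mul_assoc]

theorem mem_toSubgroup_of_forall_commute (r : ReducedWord G A B)
    (hr : ∀ g : G, Commute (r.prod φ) (of g)) {u : ℤˣ}
    (hu : u ∈ r.toList.head?.map Prod.fst) (g : G) : g ∈ toSubgroup A B (-u) := by
  have hne : r.toList ≠ [] := by rintro hnil; simp [hnil] at hu
  set x := r.head * g * r.head⁻¹
  obtain ⟨r₁, hprod₁, hfst₁, hhead₁⟩ := exists_prod_mul_of r x
  let r₂ : ReducedWord G A B := ⟨x * r.head, r.toList, r.chain⟩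
  have hprod : r₁.prod φ = r₂.prod φ := by
    rw [hprod₁, (hr x).eq]
    simp [r₂, ReducedWord.prod, mul_assoc]
  have hmem := (ReducedWord.map_fst_eq_and_of_prod_eq φ hprod).2 u
    (by rwa [← List.head?_map, hfst₁, List.head?_map])
  simpa [r₂, x, hhead₁ hne, mul_assoc] using hmem

theorem exists_forall_fst_eq_of_prod_mul_t (r r' : ReducedWord G A B)
    (hprod : r.prod φ * t = t * r'.prod φ)
    (hfst : r'.toList.map Prod.fst = r.toList.map Prod.fst) :
    ∃ u, ∀ p ∈ r.toList, p.1 = u := by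
  obtain ⟨X, hX, hXfst⟩ := exists_prod_mul_t r
  obtain ⟨Y, hY, hYfst⟩ := exists_t_mul_prod r'
  have hXY := (ReducedWord.map_fst_eq_and_of_prod_eq φ (hX.trans (hprod.trans hY.symm))).1
  rw [hfst] at hYfst
  set e := r.toList.map Prod.fst
  suffices ∃ u, ∀ x ∈ e, x = u from
    this.imp fun u hu p hp => hu p.1 (List.mem_map_of_mem hp)
  -- In the two mixed cases the lengths differ by two; in the others `1 :: e`, resp. `e`,
  -- is invariant under rotation.
  rcases hXfst with hXfst | ⟨hlast, hXfst⟩ <;> rcases hYfst with hYfst | ⟨hhead, hYfst⟩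
  · have hrot : (1 :: e).rotate 1 = 1 :: e := by
      rw [List.rotate_cons_succ, List.rotate_zero, ← hXfst, hXY, hYfst]
    exact ⟨1, fun x hx => List.eq_of_mem_of_rotate_one_eq_self hrot
      (List.mem_cons_of_mem 1 hx) List.mem_cons_self⟩
  · have := congrArg List.length (hXfst.symm.trans (hXY.trans hYfst))
    simp only [List.length_append, List.length_cons, List.length_tail, List.length_nil] at this
    omega
  · have := congrArg List.length (hXfst.symm.trans (hXY.trans hYfst))
    simp only [List.length_cons, List.length_dropLast] at this
    omega
  · have hrot : e.rotate 1 = e := List.rotate_one_eq_self_of_dropLast_eq_tail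
      (hXfst.symm.trans (hXY.trans hYfst)) (hhead.trans hlast.symm)
    exact ⟨-1, fun x hx => List.eq_of_mem_of_rotate_one_eq_self hrot hx
      (List.mem_of_mem_head? hhead)⟩

theorem exists_prod_eq_pow_mul (r : ReducedWord G A B)
    (hr : ∀ g : G, Commute (r.prod φ) (of g)) {u : ℤˣ} (hu : ∀ p ∈ r.toList, p.1 = u) :
    ∃ g₀ : G, r.prod φ = (t ^ (u : ℤ)) ^ r.toList.length * of g₀ := by
  obtain ⟨h, L, hL⟩ := r
  rcases L with _ | ⟨p, L⟩
  · exact ⟨h, by simp [ReducedWord.prod]⟩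
  · have htop := mem_toSubgroup_of_forall_commute _ hr (u := u) (by simp [hu p])
    have hs : ∀ k ∈ (of : G →* HNNExtension G A B φ).range,
        (t ^ (u : ℤ))⁻¹ * k * t ^ (u : ℤ) ∈ (of : G →* HNNExtension G A B φ).range := by
      rintro _ ⟨g, rfl⟩
      exact (inv_t_zpow_mul_of_mul_t_zpow_mem_range_iff u g).2 (htop g)
    obtain ⟨_, ⟨g₀, rfl⟩, hg₀⟩ := exists_mul_prod_map_mul_eq_pow_mul hs
      (l := (p :: L).map (of ∘ Prod.snd))
      (by rw [List.forall_mem_map]; exact fun q _ => ⟨q.2, rfl⟩) ⟨h, rfl⟩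
    refine ⟨g₀, ?_⟩
    rw [List.length_map] at hg₀
    rw [← hg₀, ReducedWord.prod, List.map_map]
    congr 2
    exact List.map_congr_left fun q hq => by simp [hu q hq]

end NormalWord.ReducedWord

theorem eq_one_of_of_mul_t_mul_of_inv_eq
    (hcent : ∀ b ∈ B, (∀ b' ∈ B, Commute b b') → Commute (of b : HNNExtension G A B φ) t)
    {h z : G} (hzB : z ∈ B) (hh : ∀ g : G, Commute h g)
    (hht : (of h : HNNExtension G A B φ) * t * (of h)⁻¹ = of z * t) : z = 1 := by
  have hhB : h ∈ B := by
    have := (inv_t_zpow_mul_of_mul_t_zpow_mem_range_iff (φ := φ) 1 (z⁻¹ * h)).1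
      ⟨h, by rw [map_mul, map_inv, eq_mul_inv_of_mul_eq hht.symm]; simp; group⟩
    exact (B.mul_mem_cancel_left (B.inv_mem hzB)).1 this
  rw [(hcent h hhB fun b _ => hh b).eq, mul_inv_cancel_right, right_eq_mul,
    ← map_one of] at hht
  exact of_injective φ hht

theorem isOfFinOrder_of_conj_t_eq
    (hcent : ∀ b ∈ B, (∀ b' ∈ B, Commute b b') → Commute (of b : HNNExtension G A B φ) t)
    {z : G} (hzB : z ∈ B) (hzt : Commute (of z : HNNExtension G A B φ) t)
    {w : HNNExtension G A B φ} (hwG : ∀ g : G, Commute w (of g))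
    (hwt : w * t * w⁻¹ = of z * t) : IsOfFinOrder z := by
  obtain ⟨r, rfl⟩ := ReducedWord.exists_prod_eq w
  let r' : ReducedWord G A B := ⟨z * r.head, r.toList, r.chain⟩
  have hprod : r.prod φ * t = t * r'.prod φ := by
    have hzr : r'.prod φ = of z * r.prod φ := by simp [r', ReducedWord.prod, mul_assoc]
    rw [hzr, ← mul_assoc, ← hzt.eq, ← hwt]
    group
  obtain ⟨u, hu⟩ := ReducedWord.exists_forall_fst_eq_of_prod_mul_t r r' hprod rfl
  rcases eq_or_ne r.toList [] with hnil | hne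
  · have hw : r.prod φ = of r.head := by simp [ReducedWord.prod, hnil]
    rw [hw] at hwt hwG
    have hz := eq_one_of_of_mul_t_mul_of_inv_eq hcent hzB
      (fun g => of_injective φ (by rw [map_mul, map_mul]; exact (hwG g).eq)) hwt
    exact hz ▸ IsOfFinOrder.one
  · obtain ⟨g₀, hg₀⟩ := r.exists_prod_eq_pow_mul hwG hu
    set s := (t : HNNExtension G A B φ) ^ (u : ℤ)
    have hconj : s ^ r.toList.length * of g₀ * s * (s ^ r.toList.length * of g₀)⁻¹ =
        of z ^ (u : ℤ) * s := by
      rw [← hg₀, ← conj_zpow, hwt, hzt.mul_zpow]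
    have hpow := pow_eq_one_of_conj_eq_mul (hzt.zpow_zpow _ _) (hg₀ ▸ hwG g₀) hconj
    refine isOfFinOrder_iff_zpow_eq_one.2
      ⟨u * r.toList.length, by simpa using hne, of_injective φ ?_⟩
    rwa [map_zpow, map_one, zpow_mul, zpow_natCast]

end HNNExtension

/-- Application of Lemma 6.5 in the proof of Theorem B of the paper: if `c ∈ B`
has infinite order and centralizes `B` (and elements of `B` centralizing `B`
commute with the stable letter), then no positive power of the twist `τ`
determined by `c` is an inner automorphism of the HNN extension; hence `τ`
has infinite order in the outer automorphism group. -/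
theorem hnn_twist_infinite_order_in_out {G : Type*} [Group G] {A B : Subgroup G}
    (φ : A ≃* B)
    (hcomm : ∀ z ∈ B, (∀ b ∈ B, z * b = b * z) →
      (HNNExtension.of z : HNNExtension G A B φ) * HNNExtension.t =
        HNNExtension.t * HNNExtension.of z)
    (c : G) (hcB : c ∈ B) (hc : ¬ IsOfFinOrder c) (hcc : ∀ b ∈ B, c * b = b * c)
    (τ : MulAut (HNNExtension G A B φ))
    (hτof : ∀ g : G, τ (HNNExtension.of g) = HNNExtension.of g)
    (hτt : τ (HNNExtension.t : HNNExtension G A B φ) =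
      HNNExtension.of c * HNNExtension.t) :
    ∀ n : ℕ, 1 ≤ n → ¬ ∃ w : HNNExtension G A B φ, ∀ x, (τ ^ n) x = w * x * w⁻¹ := by
  open HNNExtension in
  rintro n hn ⟨w, hw⟩
  have hwG : ∀ g : G, Commute w (of g) := fun g => by
    have hfix : (τ ^ n) (of g) = of g := by
      simpa using τ.pow_apply_eq_pow_mul (map_one τ) (by simpa using hτof g) n
    have hconj := hw (of g)
    rw [hfix, eq_mul_inv_iff_mul_eq] at hconj
    exact hconj.symm
  have hwt : w * t * w⁻¹ = of (c ^ n) * t := by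
    rw [← hw, τ.pow_apply_eq_pow_mul (hτof c) hτt, map_pow]
  have hzt : Commute (of (c ^ n) : HNNExtension G A B φ) t :=
    hcomm _ (pow_mem hcB n) fun b hb => (Commute.pow_left (hcc b hb) n).eq
  have hfin := isOfFinOrder_of_conj_t_eq hcomm (pow_mem hcB n) hzt hwG hwt
  exact hc ((isOfFinOrder_pow.1 hfin).resolve_right (by omega))
end

section
/- Let G be a group and let (H_k)_{k ∈ ℕ} be a countable family of subgroups of G. Assume that for every k the set of automorphic images {φ(H_k) : φ ∈ Aut(G)} meets infinitely many conjugacy classes of subgroups of G (equivalently, there are infinitely many automorphisms of G whose images of H_k are pairwise non-conjugate). Then there exists a sequence of automorphisms φ_n ∈ Aut(G) such that for every k there is an index N with the property that for all distinct m, n ≥ N the subgroups φ_m(H_k) and φ_n(H_k) are not conjugate in G. -/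
open scoped Pointwise


/-- Two subgroups of `G` are conjugate if one is the image of the other under
conjugation by an element of `G`. -/
def IsConjSubgroup {G : Type*} [Group G] (H K : Subgroup G) : Prop :=
  ∃ g : G, Subgroup.map (MulAut.conj g).toMonoidHom H = K

section Aux

variable {G : Type*} [Group G]

lemma map_conj_one (K : Subgroup G) :
    Subgroup.map (MulAut.conj (1 : G)).toMonoidHom K = K := by
  ext x; simp

lemma map_conj_conj (a b : G) (K : Subgroup G) :
    Subgroup.map (MulAut.conj a).toMonoidHom (Subgroup.map (MulAut.conj b).toMonoidHom K)
      = Subgroup.map (MulAut.conj (a * b)).toMonoidHom K := by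
  rw [Subgroup.map_map]
  congr 1
  ext x
  simp [mul_assoc]

lemma isConjSubgroup_refl (K : Subgroup G) : IsConjSubgroup K K :=
  ⟨1, map_conj_one K⟩

lemma isConjSubgroup_symm {K K' : Subgroup G} (h : IsConjSubgroup K K') :
    IsConjSubgroup K' K := by
  obtain ⟨g, rfl⟩ := h
  exact ⟨g⁻¹, by rw [map_conj_conj, inv_mul_cancel, map_conj_one]⟩

lemma isConjSubgroup_trans {K K' K'' : Subgroup G} (h : IsConjSubgroup K K')
    (h' : IsConjSubgroup K' K'') : IsConjSubgroup K K'' := by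
  obtain ⟨g, rfl⟩ := h
  obtain ⟨g', rfl⟩ := h'
  exact ⟨g' * g, (map_conj_conj g' g K).symm⟩

lemma map_aut_conj_comm (φ : MulAut G) (g : G) (K : Subgroup G) :
    Subgroup.map φ.toMonoidHom (Subgroup.map (MulAut.conj g).toMonoidHom K)
      = Subgroup.map (MulAut.conj (φ g)).toMonoidHom (Subgroup.map φ.toMonoidHom K) := by
  rw [Subgroup.map_map, Subgroup.map_map]
  congr 1
  ext x
  simp

lemma isConjSubgroup_map (φ : MulAut G) {K K' : Subgroup G} (h : IsConjSubgroup K K') :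
    IsConjSubgroup (Subgroup.map φ.toMonoidHom K) (Subgroup.map φ.toMonoidHom K') := by
  obtain ⟨g, rfl⟩ := h
  exact ⟨φ g, (map_aut_conj_comm φ g K).symm⟩

lemma map_mulAut_mul (a b : MulAut G) (K : Subgroup G) :
    Subgroup.map (a * b).toMonoidHom K
      = Subgroup.map a.toMonoidHom (Subgroup.map b.toMonoidHom K) := by
  rw [Subgroup.map_map]
  rfl

/-- The subgroup of automorphisms mapping `K` to a conjugate of `K`. -/
def autConjStab (K : Subgroup G) : Subgroup (MulAut G) where
  carrier := {χ | IsConjSubgroup (Subgroup.map χ.toMonoidHom K) K}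
  one_mem' := by
    show IsConjSubgroup (Subgroup.map (1 : MulAut G).toMonoidHom K) K
    have h1 : Subgroup.map (1 : MulAut G).toMonoidHom K = K := by ext x; simp
    rw [h1]
    exact isConjSubgroup_refl K
  mul_mem' := by
    intro a b ha hb
    simp only [Set.mem_setOf_eq] at *
    rw [map_mulAut_mul]
    exact isConjSubgroup_trans (isConjSubgroup_trans (isConjSubgroup_map a hb) ha)
      (isConjSubgroup_refl K)
  inv_mem' := by
    intro a ha
    simp only [Set.mem_setOf_eq] at *
    have h2 := isConjSubgroup_map a⁻¹ ha
    rw [← map_mulAut_mul, inv_mul_cancel] at h2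
    have h3 : Subgroup.map (1 : MulAut G).toMonoidHom K = K := by ext x; simp
    rw [h3] at h2
    exact isConjSubgroup_symm h2

lemma mem_autConjStab_iff (χ χ' : MulAut G) (K : Subgroup G) :
    χ⁻¹ * χ' ∈ autConjStab K ↔
      IsConjSubgroup (Subgroup.map χ'.toMonoidHom K) (Subgroup.map χ.toMonoidHom K) := by
  constructor
  · intro h
    have := isConjSubgroup_map χ (show IsConjSubgroup
      (Subgroup.map (χ⁻¹ * χ').toMonoidHom K) K from h)
    rwa [← map_mulAut_mul, mul_inv_cancel_left] at this
  · intro h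
    have := isConjSubgroup_map χ⁻¹ h
    rw [← map_mulAut_mul, ← map_mulAut_mul, inv_mul_cancel] at this
    have h3 : Subgroup.map (1 : MulAut G).toMonoidHom K = K := by ext x; simp
    rw [h3] at this
    exact this

end Aux

/-- Lemma 5.9 ("Neumann's lemma") of the paper: if `(H k)` is a countable family of
subgroups of `G` such that for each `k` there are infinitely many automorphisms of `G`
whose images of `H k` are pairwise non-conjugate, then there is a sequence of
automorphisms `φ n` such that for every `k` the subgroups `φ n (H k)` are eventually
pairwise non-conjugate. -/
theorem neumann_lemma_subgroup_orbits {G : Type*} [Group G] (H : ℕ → Subgroup G)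
    (hyp : ∀ k : ℕ, ∃ f : ℕ → MulAut G, ∀ m n : ℕ, m ≠ n →
      ¬ IsConjSubgroup (Subgroup.map (f m).toMonoidHom (H k))
        (Subgroup.map (f n).toMonoidHom (H k))) :
    ∃ φ : ℕ → MulAut G, ∀ k : ℕ, ∃ N : ℕ, ∀ m n : ℕ, N ≤ m → N ≤ n → m ≠ n →
      ¬ IsConjSubgroup (Subgroup.map (φ m).toMonoidHom (H k))
        (Subgroup.map (φ n).toMonoidHom (H k)) := by
  classical
  -- each `autConjStab (H k)` has infinite index
  have hinf : ∀ k : ℕ, ¬ (autConjStab (H k)).FiniteIndex := by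
    intro k hfin
    obtain ⟨f, hf⟩ := hyp k
    have hinj : Function.Injective
        (fun n => (QuotientGroup.mk (f n) : MulAut G ⧸ autConjStab (H k))) := by
      intro m n hmn
      by_contra hne
      rw [QuotientGroup.eq] at hmn
      rw [mem_autConjStab_iff] at hmn
      exact hf m n hne (isConjSubgroup_symm hmn)
    have : Infinite (MulAut G ⧸ autConjStab (H k)) := Infinite.of_injective _ hinj
    exact hfin.index_ne_zero (by simp [Subgroup.index, Nat.card_eq_zero_of_infinite])
  -- key step: avoid finitely many cosets using B. H. Neumann's theorem
  have key : ∀ (n : ℕ) (s : Finset (MulAut G)), ∃ ψ : MulAut G, ∀ k ≤ n, ∀ χ ∈ s,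
      ¬ IsConjSubgroup (Subgroup.map ψ.toMonoidHom (H k))
        (Subgroup.map χ.toMonoidHom (H k)) := by
    intro n s
    by_contra hcon
    push_neg at hcon
    have hcover : ⋃ p ∈ (Finset.range (n + 1)) ×ˢ s,
        (p.2 : MulAut G) • ((autConjStab (H p.1) : Subgroup (MulAut G)) : Set (MulAut G))
          = Set.univ := by
      apply Set.eq_univ_of_forall
      intro ψ
      obtain ⟨k, hk, χ, hχ, hconj⟩ := hcon ψ
      refine Set.mem_biUnion (show (k, χ) ∈ (Finset.range (n + 1)) ×ˢ s from
        Finset.mem_product.mpr ⟨Finset.mem_range.mpr (Nat.lt_succ_of_le hk), hχ⟩) ?_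
      rw [mem_leftCoset_iff]
      exact (mem_autConjStab_iff χ ψ (H k)).mpr hconj
    obtain ⟨p, _, hfin⟩ := Subgroup.exists_finiteIndex_of_leftCoset_cover hcover
    exact hinf p.1 hfin
  choose Ψ hΨ using key
  -- build the sequence recursively
  let aux : ℕ → Finset (MulAut G) := fun n =>
    Nat.rec ∅ (fun m prev => insert (Ψ m prev) prev) n
  have haux : ∀ n, aux (n + 1) = insert (Ψ n (aux n)) (aux n) := fun n => rfl
  set φ : ℕ → MulAut G := fun n => Ψ n (aux n) with hφ
  have hmem : ∀ m n : ℕ, m < n → φ m ∈ aux n := by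
    intro m n
    induction n with
    | zero => omega
    | succ n ih =>
      intro hmn
      rw [haux]
      rcases Nat.lt_succ_iff_lt_or_eq.mp hmn with h | h
      · exact Finset.mem_insert_of_mem (ih h)
      · subst h; exact Finset.mem_insert_self _ _
  have hprop : ∀ k m n : ℕ, k ≤ n → m < n →
      ¬ IsConjSubgroup (Subgroup.map (φ n).toMonoidHom (H k))
        (Subgroup.map (φ m).toMonoidHom (H k)) := by
    intro k m n hk hmn
    exact hΨ n (aux n) k hk (φ m) (hmem m n hmn)
  refine ⟨φ, fun k => ⟨k, fun m n hkm hkn hmn => ?_⟩⟩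
  rcases lt_or_gt_of_ne hmn with h | h
  · intro hc
    exact hprop k m n hkn h (isConjSubgroup_symm hc)
  · exact hprop k n m hkm h
end

section
/- Let G be a group with subgroups A, B and an isomorphism φ : A ≃* B, and form the HNN extension HNNExtension G A B φ with canonical injection of : G → HNNExtension G A B φ and stable letter t. Let z ∈ G be an element that centralizes B. Then there exists a unique group automorphism τ of HNNExtension G A B φ such that τ(of(g)) = of(g) for every g ∈ G and τ(t) = of(z) * t. -/
/-- Well-definedness of the transvection (DLS automorphism) determined by an HNN
splitting and an element `z` centralizing the edge group `B`: there is a unique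
automorphism `τ` of `HNNExtension G A B φ` fixing the base group pointwise and
sending the stable letter `t` to `of z * t`. -/
theorem hnn_transvection_existsUnique {G : Type*} [Group G] {A B : Subgroup G}
    (φ : A ≃* B) (z : G) (hz : ∀ b ∈ B, z * b = b * z) :
    ∃! τ : MulAut (HNNExtension G A B φ),
      (∀ g : G, τ (HNNExtension.of g) = HNNExtension.of g) ∧
        τ (HNNExtension.t : HNNExtension G A B φ) =
          HNNExtension.of z * HNNExtension.t := by
  have hx : ∀ a : A, (HNNExtension.of z * (HNNExtension.t : HNNExtension G A B φ)) * HNNExtension.of (a : G) =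
      HNNExtension.of (φ a : G) * (HNNExtension.of z * HNNExtension.t) := by
    intro a
    rw [mul_assoc, HNNExtension.t_mul_of, ← mul_assoc, ← map_mul, hz _ (φ a).2,
      map_mul, mul_assoc]
  have hx' : ∀ a : A, (HNNExtension.of z⁻¹ * (HNNExtension.t : HNNExtension G A B φ)) * HNNExtension.of (a : G) =
      HNNExtension.of (φ a : G) * (HNNExtension.of z⁻¹ * HNNExtension.t) := by
    intro a
    have h : z⁻¹ * (φ a : G) = (φ a : G) * z⁻¹ :=
      (Commute.inv_left (hz _ (φ a).2)).eq
    rw [mul_assoc, HNNExtension.t_mul_of, ← mul_assoc, ← map_mul, h, map_mul, mul_assoc]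
  let F := HNNExtension.lift HNNExtension.of (HNNExtension.of z * HNNExtension.t) hx
  let F' := HNNExtension.lift HNNExtension.of (HNNExtension.of z⁻¹ * HNNExtension.t) hx'
  have hFF' : F'.comp F = MonoidHom.id _ := by
    apply HNNExtension.hom_ext
    · ext g; simp [F, F']
    · simp [F, F', mul_assoc]
  have hF'F : F.comp F' = MonoidHom.id _ := by
    apply HNNExtension.hom_ext
    · ext g; simp [F, F']
    · simp [F, F', mul_assoc]
  refine ⟨⟨⟨F, F', fun x => ?_, fun x => ?_⟩, map_mul F⟩, ⟨?_, ?_⟩, ?_⟩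
  · exact DFunLike.congr_fun hFF' x
  · exact DFunLike.congr_fun hF'F x
  · intro g; simp [F]
  · simp [F]
  · rintro τ ⟨h1, h2⟩
    ext x
    have : (τ : HNNExtension G A B φ →* HNNExtension G A B φ) = F := by
      apply HNNExtension.hom_ext
      · ext g; simp [F, h1]
      · simp [F, h2]
    exact DFunLike.congr_fun this x
end

section
/- Let G be a group, let ω be a nonprincipal ultrafilter on ℕ, and let (S_i)_{i ∈ ℕ} be a sequence of subsets of G. Suppose that the ω-intersection K = ⋂_ω Z_G(S_i) = {g ∈ G : {i : g ∈ Z_G(S_i)} ∈ ω} of the centralizers Z_G(S_i) is a finitely generated subgroup of G. Then there exists a set J ∈ ω with K = Z_G(⋃_{i ∈ J} S_i); in particular K is itself the centralizer of a subset of G, i.e. Z_G(Z_G(K)) = K. -/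
/-- Proposition 3.24(2) of the paper (group-theoretic content): if the ω-intersection
`K` of the centralizers `Z_G(S i)` of subsets `S i ⊆ G` is a finitely generated
subgroup of `G`, then `K = Z_G(⋃_{i ∈ J} S i)` for some `J ∈ ω`; in particular `K` is
itself a centralizer in `G`, i.e. `Z_G(Z_G(K)) = K`. -/
theorem omega_intersection_of_centralizers {G : Type*} [Group G]
    (ω : Ultrafilter ℕ) (hω : (ω : Filter ℕ) ≤ Filter.cofinite)
    (S : ℕ → Set G) (K : Subgroup G)
    (hK : (K : Set G) = {g : G | {i : ℕ | g ∈ Subgroup.centralizer (S i)} ∈ ω})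
    (hfg : K.FG) :
    (∃ J : Set ℕ, J ∈ ω ∧ K = Subgroup.centralizer (⋃ i ∈ J, S i)) ∧
      Subgroup.centralizer (Subgroup.centralizer (K : Set G) : Set G) = K := by
  have hmem : ∀ g : G, g ∈ K ↔ {i : ℕ | g ∈ Subgroup.centralizer (S i)} ∈ ω := by
    intro g
    constructor
    · intro hg
      have : g ∈ (K : Set G) := hg
      rwa [hK] at this
    · intro hg
      show g ∈ (K : Set G)
      rw [hK]; exact hg
  obtain ⟨T, hT⟩ := hfg
  -- J = set of indices i such that all generators lie in centralizer (S i)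
  set J : Set ℕ := ⋂ t ∈ T, {i : ℕ | (t : G) ∈ Subgroup.centralizer (S i)} with hJ
  have hJω : J ∈ ω := by
    rw [hJ]
    refine (Filter.biInter_finset_mem T).2 ?_
    intro t ht
    exact (hmem t).1 (hT ▸ Subgroup.subset_closure ht)
  have hKeq : K = Subgroup.centralizer (⋃ i ∈ J, S i) := by
    apply le_antisymm
    · rw [← hT, Subgroup.closure_le]
      intro t ht
      rw [SetLike.mem_coe, Subgroup.mem_centralizer_iff]
      intro h hh
      simp only [Set.mem_iUnion] at hh
      obtain ⟨i, hi, hsi⟩ := hh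
      have : t ∈ Subgroup.centralizer (S i) := by
        have := Set.mem_iInter₂.1 (hi : i ∈ J) t ht
        exact this
      exact (Subgroup.mem_centralizer_iff.1 this) h hsi
    · intro g hg
      rw [hmem]
      refine ω.sets_of_superset hJω ?_
      intro i hi
      rw [Set.mem_setOf_eq, Subgroup.mem_centralizer_iff]
      intro h hh
      exact Subgroup.mem_centralizer_iff.1 hg h (Set.mem_iUnion₂.2 ⟨i, hi, hh⟩)
  refine ⟨⟨J, hJω, hKeq⟩, le_antisymm ?_ ?_⟩
  · -- Z(Z(K)) ≤ K : since K = Z(A) with A = ⋃..., A ⊆ Z(K)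
    rw [hKeq]
    intro g hg
    rw [Subgroup.mem_centralizer_iff]
    intro h hh
    have hA : h ∈ Subgroup.centralizer (K : Set G) := by
      rw [Subgroup.mem_centralizer_iff]
      intro k hk
      have : k ∈ Subgroup.centralizer (⋃ i ∈ J, S i) := hKeq ▸ hk
      exact (Subgroup.mem_centralizer_iff.1 this h hh).symm
    rw [hKeq] at hA
    exact Subgroup.mem_centralizer_iff.1 hg h hA
  · intro k hk
    rw [Subgroup.mem_centralizer_iff]
    intro h hh
    exact (Subgroup.mem_centralizer_iff.1 hh k hk).symm
end

section
/- Let X be a connected, locally finite simple graph and let G be a subgroup of the automorphism group Aut(X) of X such that G has only finitely many orbits of vertices and every vertex stabilizer in G is finite. Then G has finite index in its normalizer within Aut(X). -/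
/-!
The stabilizer of a vertex `v₀` in the normalizer `N` of `G` is finite, and since `G` has
finitely many orbits of vertices this bounds `[N : G]`. If every vertex lies within `R` of the
orbit `G v₀`, then `G` is generated by the finite set `S` of its elements moving `v₀` by at most
`2R + 1`. An element `n ∈ N` fixing `v₀` permutes `S` by conjugation and moves the finitely many
orbit representatives `t` inside a finite ball, and these data determine `n`, because
`n (g⁻¹ t) = (n g⁻¹ n⁻¹) (n t)`.
-/

section GroupAction

variable {Γ α : Type*} [Group Γ] [MulAction Γ α]

theorem Subgroup.finite_setOf_smul_mem (H : Subgroup Γ) {a : α}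
    (hstab : {g | g ∈ H ∧ g • a = a}.Finite) {B : Set α} (hB : B.Finite) :
    {g | g ∈ H ∧ g • a ∈ B}.Finite := by
  have hfiber : ∀ b ∈ B, {g | g ∈ H ∧ g • a = b}.Finite := by
    intro b _
    by_cases hb : ∃ g₀, g₀ ∈ H ∧ g₀ • a = b
    · obtain ⟨g₀, hg₀, rfl⟩ := hb
      refine (hstab.image (g₀ * ·)).subset fun g ⟨hg, hga⟩ =>
        ⟨g₀⁻¹ * g, ⟨H.mul_mem (H.inv_mem hg₀) hg, ?_⟩, by group⟩
      rw [mul_smul, hga, inv_smul_smul]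
    · exact Set.Finite.subset Set.finite_empty fun g hg => hb ⟨g, hg⟩
  exact (hB.biUnion hfiber).subset fun g ⟨hg, hga⟩ => Set.mem_biUnion hga ⟨hg, rfl⟩

theorem Subgroup.finiteIndex_subgroupOf_of_finite_stabilizer {H K : Subgroup Γ} (hHK : H ≤ K)
    {a : α} (hstab : {g | g ∈ K ∧ g • a = a}.Finite) {s : Set α} (hs : s.Finite)
    (horb : ∀ x, ∃ h ∈ H, h • x ∈ s) : (H.subgroupOf K).FiniteIndex := by
  have hT := K.finite_setOf_smul_mem hstab hs
  have := hT.to_subtype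
  have : Finite (K ⧸ H.subgroupOf K) := by
    refine Finite.of_surjective (fun t : {g | g ∈ K ∧ g • a ∈ s} =>
      (⟨(t : Γ)⁻¹, K.inv_mem t.2.1⟩ : K)) fun q => ?_
    obtain ⟨k, rfl⟩ := QuotientGroup.mk_surjective q
    obtain ⟨h, hH, hhs⟩ := horb ((k : Γ)⁻¹ • a)
    refine ⟨⟨h * (k : Γ)⁻¹, K.mul_mem (hHK hH) (K.inv_mem k.2), by rwa [mul_smul]⟩, ?_⟩
    refine QuotientGroup.eq.mpr ?_
    simpa [Subgroup.mem_subgroupOf] using hH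
  exact Subgroup.finiteIndex_of_finite_quotient

theorem MulAction.smul_eq_smul_of_conj_eq {H : Subgroup Γ} {s : Set α}
    (hs : ∀ x, ∃ h ∈ H, h • x ∈ s) {c c' : Γ} (hconj : ∀ h ∈ H, c * h * c⁻¹ = c' * h * c'⁻¹)
    (hfix : ∀ x ∈ s, c • x = c' • x) (x : α) : c • x = c' • x := by
  obtain ⟨h, hH, hx⟩ := hs x
  calc c • x = (c * h⁻¹ * c⁻¹) • c • h • x := by simp [mul_smul]
    _ = (c' * h⁻¹ * c'⁻¹) • c' • h • x := by rw [hconj _ (H.inv_mem hH), hfix _ hx]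
    _ = c' • x := by simp [mul_smul]

end GroupAction

namespace SimpleGraph

variable {V W : Type*} {X : SimpleGraph V} {Y : SimpleGraph W}

theorem Hom.edist_le (f : X →g Y) (u v : V) : Y.edist (f u) (f v) ≤ X.edist u v :=
  le_iInf fun p => (p.map f).edist_le.trans_eq (by simp)

theorem Iso.edist_eq (e : X ≃g Y) (u v : V) : Y.edist (e u) (e v) = X.edist u v := by
  refine le_antisymm (e.toHom.edist_le u v) ?_
  simpa using e.symm.toHom.edist_le (e u) (e v)

theorem Iso.dist_eq (e : X ≃g Y) (u v : V) : Y.dist (e u) (e v) = X.dist u v := by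
  simp only [dist, e.edist_eq]

instance Iso.applyMulAction : MulAction (X ≃g X) V where
  smul e v := e v
  one_smul _ := rfl
  mul_smul _ _ _ := rfl

theorem finite_setOf_dist_le (hconn : X.Connected) (hlf : ∀ v, (X.neighborSet v).Finite)
    (v₀ : V) (r : ℕ) : {w | X.dist v₀ w ≤ r}.Finite := by
  induction r with
  | zero =>
    refine (Set.finite_singleton v₀).subset fun w hw => ?_
    simp_all [hconn.dist_eq_zero_iff, eq_comm]
  | succ r ih =>
    refine (ih.union (ih.biUnion fun u _ => hlf u)).subset fun w hw => ?_
    obtain ⟨p, hp⟩ := hconn.exists_walk_length_eq_dist w v₀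
    rw [Set.mem_ofPred_eq, dist_comm, ← hp] at hw
    cases p with
    | nil => simp
    | cons hadj q =>
      refine Or.inr (Set.mem_biUnion ?_ hadj.symm)
      rw [Set.mem_ofPred_eq, dist_comm]
      exact (dist_le q).trans (by simpa using hw)

theorem le_closure_setOf_dist_le (hconn : X.Connected) {G : Subgroup (X ≃g X)} {v₀ : V} {R : ℕ}
    (hR : ∀ v, ∃ g ∈ G, X.dist v (g v₀) ≤ R) :
    G ≤ Subgroup.closure {g | g ∈ G ∧ X.dist v₀ (g v₀) ≤ 2 * R + 1} := by
  set H := Subgroup.closure {g | g ∈ G ∧ X.dist v₀ (g v₀) ≤ 2 * R + 1}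
  set P : V → Prop := fun u => ∀ g ∈ G, X.dist u (g v₀) ≤ R → g ∈ H
  have hP₀ : P v₀ := fun g hg hd => Subgroup.subset_closure ⟨hg, by omega⟩
  have hstep : ∀ {u v : V}, X.Adj u v → P v → P u := by
    intro u v hadj hv g hg hd
    obtain ⟨g', hg', hd'⟩ := hR v
    have hshort : X.dist v₀ ((g'⁻¹ * g) v₀) ≤ 2 * R + 1 := calc
      X.dist v₀ ((g'⁻¹ * g) v₀) = X.dist (g' v₀) (g v₀) := by
        rw [← g'.dist_eq]; simp
      _ ≤ X.dist (g' v₀) v + (X.dist v u + X.dist u (g v₀)) :=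
        hconn.dist_triangle.trans (Nat.add_le_add_left hconn.dist_triangle _)
      _ ≤ R + (1 + R) := by
        rw [dist_comm, dist_eq_one_iff_adj.2 hadj.symm]
        omega
      _ = 2 * R + 1 := by ring
    simpa using H.mul_mem (hv g' hg' hd')
      (Subgroup.subset_closure ⟨G.mul_mem (G.inv_mem hg') hg, hshort⟩)
  have hwalk : ∀ {u w : V}, X.Walk u w → P w → P u := by
    intro u w p
    induction p with
    | nil => exact id
    | cons hadj _ ih => exact fun hw => hstep hadj (ih hw)
  intro g hg
  exact hwalk (hconn.preconnected (g v₀) v₀).some hP₀ g hg (by simp)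

theorem finite_normalizer_stabilizer (hconn : X.Connected) (hlf : ∀ v, (X.neighborSet v).Finite)
    {G : Subgroup (X ≃g X)} {s : Set V} (hs : s.Finite) (horb : ∀ v, ∃ g ∈ G, g v ∈ s) {v₀ : V}
    (hstab : {g | g ∈ G ∧ g v₀ = v₀}.Finite) :
    {n | n ∈ Subgroup.normalizer (G : Set (X ≃g X)) ∧ n v₀ = v₀}.Finite := by
  obtain ⟨R, hR⟩ := (hs.image (X.dist v₀)).bddAbove
  have hcover : ∀ v, ∃ g ∈ G, X.dist v (g v₀) ≤ R := by
    intro v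
    obtain ⟨g, hg, hgv⟩ := horb v
    refine ⟨g⁻¹, G.inv_mem hg, ?_⟩
    rw [← g.dist_eq, dist_comm]
    simpa using hR ⟨_, hgv, rfl⟩
  set S := {g | g ∈ G ∧ X.dist v₀ (g v₀) ≤ 2 * R + 1}
  have hS : S.Finite := G.finite_setOf_smul_mem hstab (finite_setOf_dist_le hconn hlf v₀ _)
  have := hS.to_subtype
  have := hs.to_subtype
  refine Set.Finite.of_finite_image (f := fun n : X ≃g X =>
    ((fun g : S => n * g * n⁻¹), (fun t : s => n t))) ?_ ?_
  · refine ((Set.Finite.pi fun _ => hS).prod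
      (Set.Finite.pi fun _ => finite_setOf_dist_le hconn hlf v₀ R)).subset ?_
    rintro _ ⟨n, ⟨hn, hnv⟩, rfl⟩
    have hnv' : n⁻¹ v₀ = v₀ := by nth_rw 1 [← hnv]; simp
    refine ⟨fun g _ => ⟨(Subgroup.mem_normalizer_iff.mp hn g).mp g.2.1, ?_⟩, fun t _ => ?_⟩
    · nth_rw 1 [← hnv]
      simpa [hnv', n.dist_eq] using g.2.2
    · nth_rw 1 [← hnv]
      simpa [n.dist_eq] using hR ⟨t, t.2, rfl⟩
  · rintro n - n' - heq
    have hconj : ∀ g ∈ G, n * g * n⁻¹ = n' * g * n'⁻¹ := fun g hg =>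
      MonoidHom.eqOn_closure (f := (MulAut.conj n).toMonoidHom)
        (g := (MulAut.conj n').toMonoidHom) (fun g hg => congrFun (congrArg Prod.fst heq) ⟨g, hg⟩)
        (le_closure_setOf_dist_le hconn hcover hg)
    have hfix : ∀ t ∈ s, n • t = n' • t := fun t ht => congrFun (congrArg Prod.snd heq) ⟨t, ht⟩
    exact RelIso.ext (MulAction.smul_eq_smul_of_conj_eq horb hconj hfix)

end SimpleGraph

/-- Lemma 2.2 ("fi norm") of the paper, in its combinatorial form: if a subgroup `G`
of the automorphism group of a connected, locally finite simple graph `X` has finitely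
many orbits of vertices and finite vertex stabilizers, then `G` has finite index in its
normalizer within `Aut(X)`. -/
theorem finiteIndex_in_normalizer_of_proper_cocompact {V : Type*}
    (X : SimpleGraph V) (hconn : X.Connected)
    (hlf : ∀ v : V, (X.neighborSet v).Finite)
    (G : Subgroup (X ≃g X))
    (horb : ∃ s : Finset V, ∀ v : V, ∃ g ∈ G, g v ∈ s)
    (hstab : ∀ v : V, {g : X ≃g X | g ∈ G ∧ g v = v}.Finite) :
    (G.subgroupOf (Subgroup.normalizer (G : Set (X ≃g X)))).FiniteIndex := by
  obtain ⟨s, hs⟩ := horb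
  obtain ⟨v₀⟩ := hconn.nonempty
  exact Subgroup.finiteIndex_subgroupOf_of_finite_stabilizer Subgroup.le_normalizer
    (SimpleGraph.finite_normalizer_stabilizer hconn hlf s.finite_toSet hs (hstab v₀))
    s.finite_toSet hs
end

section
/- Let a group G act by isometries on a metric space X, and assume the action is metrically proper: for every x ∈ X and every R ≥ 0, the set {g ∈ G : dist(g • x, x) ≤ R} is finite. Let H ≤ G be a subgroup and let Y ⊆ X be a nonempty H-invariant subset on which H acts coboundedly, i.e. there exist y₀ ∈ Y and r ≥ 0 such that every point of Y lies within distance r of the orbit H • y₀. Then for every bounded subset B ⊆ X, only finitely many distinct sets of the form g • Y, with g ∈ G, intersect B. -/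
open Pointwise

/-- Claim 1 in the proof of Lemma 2.4 of the paper: if `G` acts metrically properly by
isometries on a metric space `X` and `H ≤ G` leaves a nonempty subset `Y ⊆ X` invariant
and acts coboundedly on it, then for every bounded set `B ⊆ X` only finitely many
distinct `G`-translates of `Y` meet `B`. -/
theorem finitely_many_translates_meeting_bounded {G X : Type*} [Group G]
    [MetricSpace X] [MulAction G X]
    (hiso : ∀ (g : G) (x y : X), dist (g • x) (g • y) = dist x y)
    (hproper : ∀ (x : X) (R : ℝ), {g : G | dist (g • x) x ≤ R}.Finite)
    (H : Subgroup G) (Y : Set X) (hYne : Y.Nonempty)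
    (hYinv : ∀ h : G, h ∈ H → h • Y = Y)
    (y₀ : X) (hy₀ : y₀ ∈ Y) (r : ℝ) (hr : 0 ≤ r)
    (hcobdd : ∀ y ∈ Y, ∃ h ∈ H, dist y (h • y₀) ≤ r) :
    ∀ B : Set X, Bornology.IsBounded B →
      {S : Set X | (∃ g : G, S = g • Y) ∧ (S ∩ B).Nonempty}.Finite := by
  intro B hB
  obtain ⟨C, hC⟩ := hB.subset_closedBall y₀
  apply Set.Finite.subset (((hproper y₀ (r + C)).image (fun k => k • Y)))
  rintro S ⟨⟨g, rfl⟩, x, hxS, hxB⟩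
  obtain ⟨y, hyY, rfl⟩ := hxS
  obtain ⟨h, hhH, hd⟩ := hcobdd y hyY
  refine ⟨g * h, ?_, ?_⟩
  · have h1 : dist ((g * h) • y₀) (g • y) ≤ r := by
      rw [mul_smul, hiso]
      rwa [dist_comm]
    have h2 : dist (g • y) y₀ ≤ C := hC hxB
    calc dist ((g * h) • y₀) y₀ ≤ dist ((g * h) • y₀) (g • y) + dist (g • y) y₀ :=
          dist_triangle _ _ _
      _ ≤ r + C := add_le_add h1 h2
  · simp only
    rw [mul_smul, hYinv h hhH]
end
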